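/- Let F : U ⊆ ℝⁿ → ℝᵐ, m ≥ n ≥ 2, be continuously differentiable, pointwise convex and monotonic on a convex open set U containing [−1,3]ⁿ, and assume F'(−eⱼ + 3eⱼ')(eⱼ − 3eⱼ') ≰ 0 for all j. Set L := 2 (min_{j} max_{k} eₖᵀ F'(−eⱼ + 3eⱼ')(eⱼ − 3eⱼ'))⁻¹ > 0. Then for all x, y ∈ [0,1]ⁿ one has ‖x − y‖_∞ ≤ L ‖F(x) − F(y)‖_∞, and F'(x) ∈ ℝ^{m×n} is injective with left inverse bounded by ‖F'(x)⁻¹‖_∞ ≤ L. -/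

import Mathlib

/-!
Write `wⱼ := eⱼ - eⱼ'`, so that the corner in the hypothesis is `zⱼ = 𝟙 - 2wⱼ` and the direction
is `2wⱼ - 𝟙`. Convexity at `zⱼ` and at `x` makes the Jacobian monotone along `x - zⱼ`, and since
`F'` is entrywise nonnegative and `x ∈ [0,1]ⁿ` this gives `F'(zⱼ)(2wⱼ - 𝟙) ≤ 2 F'(x) wⱼ`. Hence
for every `j` some row `k` of `F'(x)` has `(F'(x) wⱼ)ₖ ≥ L⁻¹`.
If `d` attains its max-norm at a coordinate `dⱼ ≥ 0`, then `dⱼ wⱼ ≤ d`, and monotonicity of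
`F'(x)` turns this into `L⁻¹ ‖d‖ ≤ (F'(x) d)ₖ`. Applied to `d = x - y` together with the
convexity bound `F'(y)(x - y) ≤ F x - F y`, the same estimate gives the bi-Lipschitz bound.
-/

open Matrix Set

variable {ι κ : Type*}

theorem Matrix.mulVec_mono_of_nonneg {R : Type*} [Semiring R] [PartialOrder R] [IsOrderedRing R]
    [Fintype ι] {A : Matrix κ ι R} (hA : ∀ k i, 0 ≤ A k i) {u v : ι → R} (huv : u ≤ v) :
    A *ᵥ u ≤ A *ᵥ v :=
  fun k => dotProduct_le_dotProduct_of_nonneg_left huv (hA k)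

theorem mulVec_sub_le_mulVec_sub_of_convex [Fintype ι] {s : Set (ι → ℝ)}
    {F : (ι → ℝ) → κ → ℝ} {F' : (ι → ℝ) → Matrix κ ι ℝ}
    (hconv : ∀ z ∈ s, ∀ w ∈ s, F' z *ᵥ (w - z) ≤ F w - F z) {x z : ι → ℝ}
    (hz : z ∈ s) (hx : x ∈ s) :
    F' z *ᵥ (x - z) ≤ F' x *ᵥ (x - z) :=
  calc F' z *ᵥ (x - z) ≤ F x - F z := hconv z hz x hx
    _ = -(F z - F x) := (neg_sub _ _).symm
    _ ≤ -(F' x *ᵥ (z - x)) := neg_le_neg (hconv x hx z hz)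
    _ = F' x *ᵥ (x - z) := by rw [← mulVec_neg, neg_sub]

theorem mulVec_two_smul_sub_one_le [Fintype ι] {A B : Matrix κ ι ℝ} (hA : ∀ k i, 0 ≤ A k i)
    (hB : ∀ k i, 0 ≤ B k i) {x w : ι → ℝ} (hx : x ∈ Icc 0 1)
    (hAB : A *ᵥ (x - (1 - 2 • w)) ≤ B *ᵥ (x - (1 - 2 • w))) :
    A *ᵥ (2 • w - 1) ≤ 2 • B *ᵥ w := by
  have hAx : 0 ≤ A *ᵥ x := by simpa using mulVec_mono_of_nonneg hA hx.1
  have hBx : B *ᵥ (x - 1) ≤ 0 := by simpa using mulVec_mono_of_nonneg hB (sub_nonpos.2 hx.2)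
  calc A *ᵥ (2 • w - 1) = A *ᵥ (x - (1 - 2 • w)) - A *ᵥ x := by
        rw [← mulVec_sub]; congr 1; abel
    _ ≤ B *ᵥ (x - (1 - 2 • w)) - 0 := sub_le_sub hAB hAx
    _ = B *ᵥ (x - 1) + 2 • B *ᵥ w := by
        rw [sub_zero, ← mulVec_smul, ← mulVec_add]; congr 1; abel
    _ ≤ 2 • B *ᵥ w := add_le_of_nonpos_left hBx

theorem exists_forall_abs_le [Finite ι] [Nonempty ι] (d : ι → ℝ) :
    ∃ j, (∀ i, |d i| ≤ d j) ∨ ∀ i, |(-d) i| ≤ (-d) j := by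
  obtain ⟨j, hj⟩ := Finite.exists_max fun i => |d i|
  refine ⟨j, ?_⟩
  rcases le_or_gt 0 (d j) with h | h
  · exact .inl fun i => abs_of_nonneg h ▸ hj i
  · exact .inr fun i => by simpa [abs_of_neg h] using hj i

section SignVec

variable [DecidableEq ι]

/-- The vector `eⱼ - eⱼ'`. -/
def signVec (j : ι) : ι → ℝ := fun i => if i = j then 1 else -1

theorem one_sub_two_smul_signVec (j : ι) :
    1 - 2 • signVec j = fun i => if i = j then (-1 : ℝ) else 3 := by
  funext i
  by_cases h : i = j <;> norm_num [signVec, h]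

theorem two_smul_signVec_sub_one (j : ι) :
    2 • signVec j - 1 = fun i => if i = j then (1 : ℝ) else -3 := by
  funext i
  by_cases h : i = j <;> norm_num [signVec, h]

theorem smul_signVec_le {d : ι → ℝ} {j : ι} (hd : ∀ i, |d i| ≤ d j) : d j • signVec j ≤ d := by
  intro i
  by_cases h : i = j
  · simp [signVec, h]
  · simpa [signVec, h] using neg_le_of_abs_le (hd i)

variable [Fintype ι] [Fintype κ] {A : Matrix κ ι ℝ} {c : ℝ}

theorem mul_norm_le_norm_of_mulVec_le (hA : ∀ k i, 0 ≤ A k i)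
    (hrow : ∀ j, ∃ k, c ≤ (A *ᵥ signVec j) k) {d : ι → ℝ} {j : ι} (hd : ∀ i, |d i| ≤ d j)
    {G : κ → ℝ} (hG : A *ᵥ d ≤ G) : c * ‖d‖ ≤ ‖G‖ := by
  obtain ⟨k, hk⟩ := hrow j
  have hdj : 0 ≤ d j := (abs_nonneg _).trans (hd j)
  have hnorm : ‖d‖ = d j := le_antisymm ((pi_norm_le_iff_of_nonneg hdj).2 hd)
    ((Real.le_norm_self _).trans (norm_le_pi_norm d j))
  calc c * ‖d‖ = c * d j := by rw [hnorm]
    _ ≤ (A *ᵥ signVec j) k * d j := mul_le_mul_of_nonneg_right hk hdj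
    _ = (A *ᵥ (d j • signVec j)) k := by rw [mulVec_smul, Pi.smul_apply, smul_eq_mul, mul_comm]
    _ ≤ (A *ᵥ d) k := mulVec_mono_of_nonneg hA (smul_signVec_le hd) k
    _ ≤ G k := hG k
    _ ≤ ‖G‖ := (Real.le_norm_self _).trans (norm_le_pi_norm G k)

theorem mul_norm_le_norm_mulVec [Nonempty ι] (hA : ∀ k i, 0 ≤ A k i)
    (hrow : ∀ j, ∃ k, c ≤ (A *ᵥ signVec j) k) (d : ι → ℝ) : c * ‖d‖ ≤ ‖A *ᵥ d‖ := by
  obtain ⟨j, hd | hd⟩ := exists_forall_abs_le d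
  · exact mul_norm_le_norm_of_mulVec_le hA hrow hd le_rfl
  · simpa [mulVec_neg] using mul_norm_le_norm_of_mulVec_le hA hrow hd le_rfl

theorem mul_norm_sub_le_norm_sub [Nonempty ι] {s : Set (ι → ℝ)} {F : (ι → ℝ) → κ → ℝ}
    {F' : (ι → ℝ) → Matrix κ ι ℝ} (hconv : ∀ z ∈ s, ∀ w ∈ s, F' z *ᵥ (w - z) ≤ F w - F z)
    (hmono : ∀ z ∈ s, ∀ k i, 0 ≤ F' z k i) (hrow : ∀ z ∈ s, ∀ j, ∃ k, c ≤ (F' z *ᵥ signVec j) k)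
    {x y : ι → ℝ} (hx : x ∈ s) (hy : y ∈ s) : c * ‖x - y‖ ≤ ‖F x - F y‖ := by
  obtain ⟨j, hd | hd⟩ := exists_forall_abs_le (x - y)
  · exact mul_norm_le_norm_of_mulVec_le (hmono y hy) (hrow y hy) hd (hconv y hy x hx)
  · rw [neg_sub] at hd
    rw [norm_sub_rev x, norm_sub_rev (F x)]
    exact mul_norm_le_norm_of_mulVec_le (hmono x hx) (hrow x hx) hd (hconv x hx y hy)

end SignVec

theorem Matrix.injective_mulVec_of_mul_norm_le [Fintype ι] [Fintype κ] {A : Matrix κ ι ℝ} {c : ℝ}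
    (hc : 0 < c) (h : ∀ d, c * ‖d‖ ≤ ‖A *ᵥ d‖) : Function.Injective A.mulVec := by
  intro d₁ d₂ hd
  have h₀ := h (d₁ - d₂)
  rw [mulVec_sub, hd, sub_self, norm_zero, ← mul_zero c] at h₀
  exact sub_eq_zero.1 (norm_le_zero_iff.1 (le_of_mul_le_mul_left h₀ hc))

section MinMax

variable [Finite ι] [Finite κ] (f : ι → κ → ℝ)

theorem exists_ciInf_ciSup_le [Nonempty κ] (j : ι) : ∃ k, ⨅ j, ⨆ k, f j k ≤ f j k := by
  obtain ⟨k, hk⟩ := exists_eq_ciSup_of_finite (f := f j)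
  exact ⟨k, hk ▸ ciInf_le (Finite.bddBelow_range _) j⟩

theorem ciInf_ciSup_pos [Nonempty ι] (h : ∀ j, ∃ k, 0 < f j k) : 0 < ⨅ j, ⨆ k, f j k := by
  obtain ⟨j, hj⟩ := exists_eq_ciInf_of_finite (f := fun j => ⨆ k, f j k)
  obtain ⟨k, hk⟩ := h j
  exact hj ▸ hk.trans_le (le_ciSup (Finite.bddAbove_range _) k)

end MinMax

theorem stmt_4_general (n m : ℕ) (hn : 2 ≤ n)
    (U : Set (Fin n → ℝ))
    (hUsub : Set.Icc (fun _ => (-1:ℝ)) (fun _ => (3:ℝ)) ⊆ U)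
    (F : (Fin n → ℝ) → (Fin m → ℝ))
    (F' : (Fin n → ℝ) → Matrix (Fin m) (Fin n) ℝ)
    (hmono : ∀ z ∈ U, ∀ k j, 0 ≤ F' z k j)
    (hconv : ∀ z ∈ U, ∀ w ∈ U, (F' z).mulVec (w - z) ≤ F w - F z)
    (hcrit : ∀ j : Fin n, ∃ k : Fin m,
      0 < ((F' (fun i => if i = j then -1 else 3)).mulVec
            (fun i => if i = j then 1 else -3)) k)
    (L : ℝ)
    (hLdef : L = 2 * (⨅ j : Fin n, ⨆ k : Fin m,
      ((F' (fun i => if i = j then -1 else 3)).mulVec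
        (fun i => if i = j then 1 else -3)) k)⁻¹) :
    0 < L ∧
    ∀ x ∈ Set.Icc (0 : Fin n → ℝ) 1, ∀ y ∈ Set.Icc (0 : Fin n → ℝ) 1,
      ‖x - y‖ ≤ L * ‖F x - F y‖ ∧
      Function.Injective ((F' x).mulVec) ∧
      ∀ d : Fin n → ℝ, L⁻¹ * ‖d‖ ≤ ‖(F' x).mulVec d‖ := by
  have : Nonempty (Fin n) := ⟨⟨0, by omega⟩⟩
  have : Nonempty (Fin m) := ⟨(hcrit ⟨0, by omega⟩).choose⟩
  have hc := ciInf_ciSup_pos _ hcrit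
  set c := ⨅ j : Fin n, ⨆ k : Fin m,
    ((F' (fun i => if i = j then -1 else 3)).mulVec (fun i => if i = j then 1 else -3)) k
  have hL : L⁻¹ = c / 2 := by rw [hLdef, mul_inv, inv_inv]; ring
  have hLpos : 0 < L := by rw [hLdef]; exact mul_pos two_pos (inv_pos.2 hc)
  have hbox : Icc (0 : Fin n → ℝ) 1 ⊆ U :=
    (Icc_subset_Icc (fun _ => by norm_num) fun _ => by norm_num).trans hUsub
  have hcorner (j : Fin n) : 1 - 2 • signVec j ∈ U :=
    hUsub ⟨fun i => by by_cases h : i = j <;> norm_num [signVec, h],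
      fun i => by by_cases h : i = j <;> norm_num [signVec, h]⟩
  have hrow : ∀ x ∈ Icc (0 : Fin n → ℝ) 1, ∀ j, ∃ k, L⁻¹ ≤ (F' x *ᵥ signVec j) k := by
    intro x hx j
    obtain ⟨k, hk⟩ := exists_ciInf_ciSup_le (fun j k =>
      (F' (fun i => if i = j then -1 else 3) *ᵥ fun i => if i = j then 1 else -3) k) j
    have hjac := mulVec_sub_le_mulVec_sub_of_convex hconv (hcorner j) (hbox hx)
    have hcore := mulVec_two_smul_sub_one_le (hmono _ (hcorner j)) (hmono x (hbox hx)) hx hjac k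
    rw [two_smul_signVec_sub_one, one_sub_two_smul_signVec] at hcore
    simp only [Pi.smul_apply, nsmul_eq_mul, Nat.cast_ofNat] at hcore
    exact ⟨k, by rw [hL]; linarith⟩
  have hlower (x) (hx : x ∈ Icc (0 : Fin n → ℝ) 1) :=
    mul_norm_le_norm_mulVec (hmono x (hbox hx)) (hrow x hx)
  refine ⟨hLpos, fun x hx y hy =>
    ⟨?_, injective_mulVec_of_mul_norm_le (inv_pos.2 hLpos) (hlower x hx), hlower x hx⟩⟩
  rw [← inv_mul_le_iff₀ hLpos]
  exact mul_norm_sub_le_norm_sub (fun z hz w hw => hconv z (hbox hz) w (hbox hw))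
    (fun z hz => hmono z (hbox hz)) hrow hx hy

theorem stmt_4 (n m : ℕ) (hn : 2 ≤ n) (hnm : n ≤ m)
    (U : Set (Fin n → ℝ)) (hUopen : IsOpen U) (hUconv : Convex ℝ U)
    (hUsub : Set.Icc (fun _ => (-1:ℝ)) (fun _ => (3:ℝ)) ⊆ U)
    (F : (Fin n → ℝ) → (Fin m → ℝ))
    (F' : (Fin n → ℝ) → Matrix (Fin m) (Fin n) ℝ)
    (hderiv : ∀ z ∈ U, HasFDerivAt F ((F' z).mulVecLin.toContinuousLinearMap) z)
    (hcont : ContinuousOn F' U)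
    (hmono : ∀ z ∈ U, ∀ k j, 0 ≤ F' z k j)
    (hconv : ∀ z ∈ U, ∀ w ∈ U, (F' z).mulVec (w - z) ≤ F w - F z)
    (hcrit : ∀ j : Fin n, ∃ k : Fin m,
      0 < ((F' (fun i => if i = j then -1 else 3)).mulVec
            (fun i => if i = j then 1 else -3)) k)
    (L : ℝ)
    (hLdef : L = 2 * (⨅ j : Fin n, ⨆ k : Fin m,
      ((F' (fun i => if i = j then -1 else 3)).mulVec
        (fun i => if i = j then 1 else -3)) k)⁻¹) :
    0 < L ∧
    ∀ x ∈ Set.Icc (0 : Fin n → ℝ) 1, ∀ y ∈ Set.Icc (0 : Fin n → ℝ) 1,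
      ‖x - y‖ ≤ L * ‖F x - F y‖ ∧
      Function.Injective ((F' x).mulVec) ∧
      ∀ d : Fin n → ℝ, L⁻¹ * ‖d‖ ≤ ‖(F' x).mulVec d‖ :=
  stmt_4_general n m hn U hUsub F F' hmono hconv hcrit L hLdef
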